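/- arXiv:2409.05685 — 2 statements merged into one kernel-verified Lean document; each statement's English description precedes it below -/
import Mathlib

section
/- (Chen's identity, level-k form, for smooth paths) For a C¹ path X : [s,t] → ℝ^{d+1} and any v with s ≤ v ≤ t, and any multi-index (i₁,…,i_k), one has S^{i₁…i_k}_{s,t}(X) = Σ_{ℓ=0}^{k} S^{i₁…i_ℓ}_{s,v}(X) · S^{i_{ℓ+1}…i_k}_{v,t}(X), where the empty multi-index integral is defined to be 1. -/
open MeasureTheory

/-- The iterated integral `S^{i₁…i_k}_{s,t}(X)` of a path `X : ℝ → ℝ^n` over the ordered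
simplex `{s ≤ τ₁ ≤ ⋯ ≤ τ_k ≤ t}`, with integrand `(X^{i₁})'(τ₁) ⋯ (X^{i_k})'(τ_k)`.
For `k = 0` (the empty multi-index) it equals `1`. -/
noncomputable def iterSig {n : ℕ} (X : ℝ → Fin n → ℝ) (s t : ℝ) {k : ℕ}
    (idx : Fin k → Fin n) : ℝ :=
  ∫ τ in {τ : Fin k → ℝ | (∀ l, s ≤ τ l ∧ τ l ≤ t) ∧ ∀ l m : Fin k, l ≤ m → τ l ≤ τ m},
    ∏ l, deriv (fun u => X u (idx l)) (τ l)

namespace ChenAux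

/-- The closed ordered simplex. -/
def simplex (s t : ℝ) (k : ℕ) : Set (Fin k → ℝ) :=
  {τ | (∀ l, s ≤ τ l ∧ τ l ≤ t) ∧ ∀ l m : Fin k, l ≤ m → τ l ≤ τ m}

lemma isClosed_simplex (s t : ℝ) (k : ℕ) : IsClosed (simplex s t k) := by
  have h1 : IsClosed {τ : Fin k → ℝ | ∀ l, s ≤ τ l ∧ τ l ≤ t} := by
    rw [Set.setOf_forall]
    exact isClosed_iInter fun l =>
      (isClosed_le continuous_const (continuous_apply l)).inter
        (isClosed_le (continuous_apply l) continuous_const)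
  have h2 : IsClosed {τ : Fin k → ℝ | ∀ l m : Fin k, l ≤ m → τ l ≤ τ m} := by
    rw [Set.setOf_forall]
    refine isClosed_iInter fun l => ?_
    rw [Set.setOf_forall]
    refine isClosed_iInter fun m => ?_
    by_cases h : l ≤ m
    · simp only [h, true_implies]
      exact isClosed_le (continuous_apply l) (continuous_apply m)
    · simp only [h, false_implies, Set.setOf_true]
      exact isClosed_univ
  exact h1.inter h2

lemma isCompact_simplex (s t : ℝ) (k : ℕ) : IsCompact (simplex s t k) := by
  refine IsCompact.of_isClosed_subset
    (isCompact_Icc (a := fun _ : Fin k => s) (b := fun _ : Fin k => t))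
    (isClosed_simplex s t k) ?_
  intro τ hτ
  rw [Set.mem_Icc]
  exact ⟨fun l => (hτ.1 l).1, fun l => (hτ.1 l).2⟩

lemma filter_le_card {k : ℕ} (τ : Fin k → ℝ) (v : ℝ)
    (hmono : ∀ l m : Fin k, l ≤ m → τ l ≤ τ m) (l : Fin k) :
    τ l ≤ v ↔ l.val < (Finset.univ.filter fun m => τ m ≤ v).card := by
  classical
  constructor
  · intro h
    have hsub : Finset.Iic l ⊆ Finset.univ.filter fun m => τ m ≤ v := by
      intro m hm
      simp only [Finset.mem_Iic] at hm
      simp only [Finset.mem_filter, Finset.mem_univ, true_and]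
      exact le_trans (hmono m l hm) h
    have hc := Finset.card_le_card hsub
    rw [Fin.card_Iic] at hc
    omega
  · intro h
    by_contra hv
    push_neg at hv
    have hsub : (Finset.univ.filter fun m => τ m ≤ v) ⊆ Finset.Iio l := by
      intro m hm
      simp only [Finset.mem_filter, Finset.mem_univ, true_and] at hm
      simp only [Finset.mem_Iio]
      by_contra hle
      push_neg at hle
      exact absurd (hmono l m hle) (by linarith)
    have hc := Finset.card_le_card hsub
    rw [Fin.card_Iio] at hc
    omega

lemma meas_imp {α : Type*} [MeasurableSpace α] (c : Prop) [Decidable c] {S : Set α}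
    (hS : MeasurableSet S) : MeasurableSet {x | c → x ∈ S} := by
  by_cases h : c
  · simp only [h, true_implies]; exact hS
  · simp only [h, false_implies, Set.setOf_true]; exact MeasurableSet.univ

lemma piece {n : ℕ} (g : Fin n → ℝ → ℝ) (s v t : ℝ)
    (hsv : s ≤ v) (hvt : v ≤ t) (k a : ℕ) (ha : a ≤ k) (idx : Fin k → Fin n) :
    ∫ τ in {τ : Fin k → ℝ | τ ∈ simplex s t k ∧
        ∀ l : Fin k, (l.val < a → τ l ≤ v) ∧ (a ≤ l.val → v < τ l)},
      ∏ l, g (idx l) (τ l)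
    = (∫ σ in simplex s v a, ∏ i, g (idx ⟨i.val, lt_of_lt_of_le i.isLt ha⟩) (σ i)) *
      (∫ ρ in simplex v t (k - a), ∏ i, g (idx ⟨a + i.val, by omega⟩) (ρ i)) := by
  classical
  have hab : a + (k - a) = k := by omega
  set b := k - a with hb
  let ψ : Fin a ⊕ Fin b ≃ Fin k := finSumFinEquiv.trans (finCongr hab)
  let e : ((Fin a → ℝ) × (Fin b → ℝ)) ≃ᵐ (Fin k → ℝ) :=
    (MeasurableEquiv.sumPiEquivProdPi (fun _ : Fin a ⊕ Fin b => ℝ)).symm.trans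
      (MeasurableEquiv.piCongrLeft (fun _ : Fin k => ℝ) ψ)
  have hmp : MeasurePreserving e volume volume := by
    have h1 := volume_measurePreserving_sumPiEquivProdPi_symm (fun _ : Fin a ⊕ Fin b => ℝ)
    have h2 := volume_measurePreserving_piCongrLeft (fun _ : Fin k => ℝ) ψ
    exact h2.comp h1
  have hτ1 : ∀ (p : (Fin a → ℝ) × (Fin b → ℝ)) (i : Fin a), e p (ψ (Sum.inl i)) = p.1 i := by
    intro p i
    show (Equiv.piCongrLeft (fun _ : Fin k => ℝ) ψ)
        ((Equiv.sumPiEquivProdPi (fun _ : Fin a ⊕ Fin b => ℝ)).symm (p.1, p.2)) (ψ (Sum.inl i))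
      = p.1 i
    exact Equiv.piCongrLeft_sumInl (fun _ : Fin k => ℝ) ψ p.1 p.2 i
  have hτ2 : ∀ (p : (Fin a → ℝ) × (Fin b → ℝ)) (i : Fin b), e p (ψ (Sum.inr i)) = p.2 i := by
    intro p i
    show (Equiv.piCongrLeft (fun _ : Fin k => ℝ) ψ)
        ((Equiv.sumPiEquivProdPi (fun _ : Fin a ⊕ Fin b => ℝ)).symm (p.1, p.2)) (ψ (Sum.inr i))
      = p.2 i
    exact Equiv.piCongrLeft_sumInr (fun _ : Fin k => ℝ) ψ p.1 p.2 i
  have hψl : ∀ i : Fin a, (ψ (Sum.inl i)).val = i.val := by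
    intro i; simp [ψ]
  have hψr : ∀ i : Fin b, (ψ (Sum.inr i)).val = a + i.val := by
    intro i; simp [ψ]
  -- the preimage of the slab is a product of simplex-like sets
  have hpre : e ⁻¹' {τ : Fin k → ℝ | τ ∈ simplex s t k ∧
        ∀ l : Fin k, (l.val < a → τ l ≤ v) ∧ (a ≤ l.val → v < τ l)}
      = (simplex s v a) ×ˢ
        {ρ : Fin b → ℝ | (∀ l, v < ρ l ∧ ρ l ≤ t) ∧ ∀ l m : Fin b, l ≤ m → ρ l ≤ ρ m} := by
    ext p
    simp only [Set.mem_preimage, Set.mem_setOf_eq, Set.mem_prod, simplex]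
    constructor
    · rintro ⟨⟨hbd, hmono⟩, hsplit⟩
      refine ⟨⟨fun i => ?_, fun i i' hii => ?_⟩, fun i => ?_, fun i i' hii => ?_⟩
      · constructor
        · have := (hbd (ψ (Sum.inl i))).1; rwa [hτ1 p i] at this
        · have := (hsplit (ψ (Sum.inl i))).1 (by rw [hψl]; exact i.isLt)
          rwa [hτ1 p i] at this
      · have hle : ψ (Sum.inl i) ≤ ψ (Sum.inl i') := by
          rw [Fin.le_def, hψl, hψl]; exact hii
        have := hmono _ _ hle
        rwa [hτ1 p i, hτ1 p i'] at this
      · constructor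
        · have := (hsplit (ψ (Sum.inr i))).2 (by rw [hψr]; omega)
          rwa [hτ2 p i] at this
        · have := (hbd (ψ (Sum.inr i))).2; rwa [hτ2 p i] at this
      · have hle : ψ (Sum.inr i) ≤ ψ (Sum.inr i') := by
          rw [Fin.le_def, hψr, hψr]; exact Nat.add_le_add_left hii a
        have := hmono _ _ hle
        rwa [hτ2 p i, hτ2 p i'] at this
    · rintro ⟨⟨hσbd, hσmono⟩, hρbd, hρmono⟩
      have hval : ∀ l : Fin k, e p l = e p l := fun _ => rfl
      refine ⟨⟨fun l => ?_, fun l m hlm => ?_⟩, fun l => ?_⟩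
      · obtain ⟨j, rfl⟩ := ψ.surjective l
        cases j with
        | inl i =>
          rw [hτ1 p i]
          exact ⟨(hσbd i).1, le_trans (hσbd i).2 hvt⟩
        | inr i =>
          rw [hτ2 p i]
          exact ⟨le_trans hsv (le_of_lt (hρbd i).1), (hρbd i).2⟩
      · obtain ⟨j, rfl⟩ := ψ.surjective l
        obtain ⟨j', rfl⟩ := ψ.surjective m
        cases j with
        | inl i =>
          cases j' with
          | inl i' =>
            rw [hτ1 p i, hτ1 p i']
            refine hσmono i i' ?_
            rw [Fin.le_def]
            have := hlm; rw [Fin.le_def, hψl, hψl] at this; exact this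
          | inr i' =>
            rw [hτ1 p i, hτ2 p i']
            exact le_trans (hσbd i).2 (le_of_lt (hρbd i').1)
        | inr i =>
          cases j' with
          | inl i' =>
            exfalso
            rw [Fin.le_def, hψr, hψl] at hlm
            have := i'.isLt; omega
          | inr i' =>
            rw [hτ2 p i, hτ2 p i']
            refine hρmono i i' ?_
            rw [Fin.le_def]
            rw [Fin.le_def, hψr, hψr] at hlm; omega
      · obtain ⟨j, rfl⟩ := ψ.surjective l
        cases j with
        | inl i =>
          rw [hτ1 p i, hψl]
          exact ⟨fun _ => (hσbd i).2, fun h => absurd h (by have := i.isLt; omega)⟩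
        | inr i =>
          rw [hτ2 p i, hψr]
          exact ⟨fun h => absurd h (by omega), fun _ => (hρbd i).1⟩
  -- transfer the integral
  rw [← hmp.setIntegral_preimage_emb e.measurableEmbedding, hpre]
  -- factor the integrand
  have hint : ∀ p : (Fin a → ℝ) × (Fin b → ℝ),
      (∏ l, g (idx l) (e p l)) =
      (∏ i : Fin a, g (idx ⟨i.val, lt_of_lt_of_le i.isLt ha⟩) (p.1 i)) *
      (∏ i : Fin b, g (idx ⟨a + i.val, by omega⟩) (p.2 i)) := by
    intro p
    rw [← ψ.prod_comp (fun l => g (idx l) (e p l)), Fintype.prod_sum_type]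
    congr 1
    · refine Finset.prod_congr rfl fun i _ => ?_
      rw [hτ1 p i]
      congr 1
    · refine Finset.prod_congr rfl fun i _ => ?_
      rw [hτ2 p i]
      congr 1
  simp_rw [hint]
  have hae : {ρ : Fin b → ℝ | (∀ l, v < ρ l ∧ ρ l ≤ t) ∧ ∀ l m : Fin b, l ≤ m → ρ l ≤ ρ m}
      =ᵐ[(volume : Measure (Fin b → ℝ))] simplex v t b := by
    rw [MeasureTheory.ae_eq_set]
    constructor
    · have : {ρ : Fin b → ℝ | (∀ l, v < ρ l ∧ ρ l ≤ t) ∧ ∀ l m : Fin b, l ≤ m → ρ l ≤ ρ m}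
          \ simplex v t b = ∅ := by
        rw [Set.diff_eq_empty]
        rintro ρ ⟨hbd, hmono⟩
        exact ⟨fun l => ⟨le_of_lt (hbd l).1, (hbd l).2⟩, hmono⟩
      rw [this]; exact measure_empty
    · refine measure_mono_null (t := ⋃ l : Fin b, {ρ : Fin b → ℝ | ρ l = v}) ?_ ?_
      · rintro ρ ⟨⟨hbd, hmono⟩, hns⟩
        simp only [Set.mem_setOf_eq, not_and] at hns
        rw [Set.mem_iUnion]
        by_contra hall
        push_neg at hall
        simp only [Set.mem_setOf_eq] at hall
        refine hns (fun l => ⟨lt_of_le_of_ne (hbd l).1 (fun h => hall l h.symm), (hbd l).2⟩) hmono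
      · refine measure_iUnion_null fun l => ?_
        rw [volume_pi]
        exact Measure.pi_hyperplane (fun _ : Fin b => (volume : Measure ℝ)) l v
  rw [Measure.volume_eq_prod]
  refine Eq.trans (setIntegral_prod_mul
    (fun σ : Fin a → ℝ => ∏ i : Fin a, g (idx ⟨i.val, lt_of_lt_of_le i.isLt ha⟩) (σ i))
    (fun ρ : Fin b → ℝ => ∏ i : Fin b, g (idx ⟨a + i.val, by omega⟩) (ρ i))
    (simplex s v a)
    {ρ : Fin b → ℝ | (∀ l, v < ρ l ∧ ρ l ≤ t) ∧ ∀ l m : Fin b, l ≤ m → ρ l ≤ ρ m}) ?_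
  exact congrArg (fun z => (∫ σ in simplex s v a,
      ∏ i : Fin a, g (idx ⟨i.val, lt_of_lt_of_le i.isLt ha⟩) (σ i)) * z)
    (setIntegral_congr_set hae)

end ChenAux

theorem chen_identity (d : ℕ) (X : ℝ → Fin (d + 1) → ℝ) (hX : ContDiff ℝ 1 X)
    (s v t : ℝ) (hsv : s ≤ v) (hvt : v ≤ t) (k : ℕ) (idx : Fin k → Fin (d + 1)) :
    iterSig X s t idx =
      ∑ l : Fin (k + 1),
        iterSig X s v (fun m : Fin l.val =>
            idx ⟨m.val, lt_of_lt_of_le m.isLt (Nat.lt_succ_iff.mp l.isLt)⟩) *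
        iterSig X v t (fun m : Fin (k - l.val) =>
            idx ⟨l.val + m.val, by have h1 := m.isLt; omega⟩) := by
  classical
  have hg : ∀ i : Fin (d + 1), Continuous (deriv fun u => X u i) := fun i =>
    (contDiff_pi.mp hX i).continuous_deriv le_rfl
  set f : (Fin k → ℝ) → ℝ := fun τ => ∏ l, deriv (fun u => X u (idx l)) (τ l) with hf
  have hfc : Continuous f := by
    apply continuous_finset_prod
    intro l _
    exact (hg (idx l)).comp (continuous_apply l)
  -- the slabs
  set B : Fin (k + 1) → Set (Fin k → ℝ) := fun ℓ =>
    {τ : Fin k → ℝ | τ ∈ ChenAux.simplex s t k ∧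
      ∀ l : Fin k, (l.val < ℓ.val → τ l ≤ v) ∧ (ℓ.val ≤ l.val → v < τ l)} with hB
  have hBmeas : ∀ ℓ, MeasurableSet (B ℓ) := by
    intro ℓ
    have h1 : MeasurableSet {τ : Fin k → ℝ |
        ∀ l : Fin k, (l.val < ℓ.val → τ l ≤ v) ∧ (ℓ.val ≤ l.val → v < τ l)} := by
      rw [Set.setOf_forall]
      refine MeasurableSet.iInter fun l => ?_
      have hA : MeasurableSet {τ : Fin k → ℝ | l.val < ℓ.val → τ l ≤ v} :=
        ChenAux.meas_imp _ (measurableSet_le (measurable_pi_apply l) measurable_const)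
      have hC : MeasurableSet {τ : Fin k → ℝ | ℓ.val ≤ l.val → v < τ l} :=
        ChenAux.meas_imp _ (measurableSet_lt measurable_const (measurable_pi_apply l))
      exact hA.inter hC
    exact ((ChenAux.isClosed_simplex s t k).measurableSet).inter h1
  have hdisjKey : ∀ ℓ ℓ' : Fin (k + 1), ℓ.val < ℓ'.val → Disjoint (B ℓ) (B ℓ') := by
    intro ℓ ℓ' hlt
    rw [Set.disjoint_left]
    rintro τ ⟨hτA, h1⟩ ⟨_, h2⟩
    have hlk : ℓ.val < k := by have := ℓ'.isLt; omega
    have hv1 := (h1 ⟨ℓ.val, hlk⟩).2 (le_refl _)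
    have hv2 := (h2 ⟨ℓ.val, hlk⟩).1 hlt
    exact absurd hv2 (not_le.mpr hv1)
  have hdisj : Pairwise (Function.onFun Disjoint B) := by
    intro ℓ ℓ' hne
    rcases Nat.lt_or_ge ℓ.val ℓ'.val with h | h
    · exact hdisjKey ℓ ℓ' h
    · have hne' : ℓ'.val < ℓ.val := by
        rcases Nat.lt_or_ge ℓ'.val ℓ.val with h' | h'
        · exact h'
        · exact absurd (Fin.ext (le_antisymm h' h)) hne
      exact (hdisjKey ℓ' ℓ hne').symm
  have hcover : ChenAux.simplex s t k = ⋃ ℓ : Fin (k + 1), B ℓ := by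
    ext τ
    simp only [Set.mem_iUnion]
    constructor
    · intro hτ
      set c := (Finset.univ.filter fun m : Fin k => τ m ≤ v).card with hc
      have hck : c ≤ k := by
        refine le_trans (Finset.card_filter_le _ _) ?_
        simp
      refine ⟨⟨c, by omega⟩, hτ, fun l => ⟨fun hl => ?_, fun hl => ?_⟩⟩
      · exact (ChenAux.filter_le_card τ v hτ.2 l).mpr hl
      · by_contra hv
        push_neg at hv
        have h1 := (ChenAux.filter_le_card τ v hτ.2 l).mp hv
        have hl' : (Finset.univ.filter fun m : Fin k => τ m ≤ v).card ≤ l.val := hl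
        omega
    · rintro ⟨ℓ, hτ, _⟩
      exact hτ
  have hintA : IntegrableOn f (ChenAux.simplex s t k) volume :=
    hfc.continuousOn.integrableOn_compact (ChenAux.isCompact_simplex s t k)
  have hsplit : iterSig X s t idx = ∑ ℓ : Fin (k + 1), ∫ τ in B ℓ, f τ := by
    have h0 : iterSig X s t idx = ∫ τ in ChenAux.simplex s t k, f τ := rfl
    rw [h0, hcover]
    exact integral_iUnion_fintype hBmeas hdisj fun ℓ =>
      hintA.mono_set (by rw [hcover]; exact Set.subset_iUnion B ℓ)
  rw [hsplit]
  refine Finset.sum_congr rfl fun ℓ _ => ?_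
  exact ChenAux.piece (fun i => deriv fun u => X u i) s v t hsv hvt k ℓ.val
    (Nat.lt_succ_iff.mp ℓ.isLt) idx
end

section
/- (Shuffle property, 1×2 case) For a C¹ path X : ℝ → ℝ^{d+1} and indices i, j, k: S^i_{s,t}(X) · S^{jk}_{s,t}(X) = S^{ijk}_{s,t}(X) + S^{jik}_{s,t}(X) + S^{jki}_{s,t}(X). -/
open MeasureTheory

namespace ShuffleAux

instance : Measure.IsAddHaarMeasure (volume : Measure (ℝ × ℝ)) :=
  Measure.prod.instIsAddHaarMeasure _ _

instance : Measure.IsAddHaarMeasure (volume : Measure (ℝ × ℝ × ℝ)) :=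
  Measure.prod.instIsAddHaarMeasure _ _

noncomputable def eq1 : (Fin 1 → ℝ) ≃ᵐ ℝ := MeasurableEquiv.funUnique (Fin 1) ℝ
noncomputable def eq2 : (Fin 2 → ℝ) ≃ᵐ ℝ × ℝ :=
  (MeasurableEquiv.piFinSuccAbove (fun _ => ℝ) 0).trans ((MeasurableEquiv.refl ℝ).prodCongr eq1)
noncomputable def eq3 : (Fin 3 → ℝ) ≃ᵐ ℝ × ℝ × ℝ :=
  (MeasurableEquiv.piFinSuccAbove (fun _ => ℝ) 0).trans ((MeasurableEquiv.refl ℝ).prodCongr eq2)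

lemma eq1_apply (τ : Fin 1 → ℝ) : eq1 τ = τ 0 := rfl

lemma eq2_apply (τ : Fin 2 → ℝ) : eq2 τ = (τ 0, τ 1) := by
  simp [eq2, eq1, MeasurableEquiv.piFinSuccAbove, MeasurableEquiv.funUnique,
    MeasurableEquiv.prodCongr, MeasurableEquiv.trans, Fin.succAbove]
  rfl

lemma eq3_apply (τ : Fin 3 → ℝ) : eq3 τ = (τ 0, τ 1, τ 2) := by
  simp [eq3, eq2, eq1, MeasurableEquiv.piFinSuccAbove, MeasurableEquiv.funUnique,
    MeasurableEquiv.prodCongr, MeasurableEquiv.trans, Fin.succAbove]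
  exact ⟨rfl, rfl⟩

lemma mp1 : MeasurePreserving eq1 volume volume := volume_preserving_funUnique _ _

lemma mp2 : MeasurePreserving eq2 volume volume := by
  have h1 := volume_preserving_piFinSuccAbove (fun _ : Fin 2 => ℝ) 0
  have h2 : MeasurePreserving (Prod.map (id : ℝ → ℝ) eq1) (volume.prod volume)
      (volume.prod volume) := (MeasurePreserving.id volume).prod mp1
  rw [← Measure.volume_eq_prod] at h2
  exact h2.comp h1

lemma mp3 : MeasurePreserving eq3 volume volume := by
  have h1 := volume_preserving_piFinSuccAbove (fun _ : Fin 3 => ℝ) 0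
  have h2 : MeasurePreserving (Prod.map (id : ℝ → ℝ) eq2) (volume.prod volume)
      (volume.prod volume) := (MeasurePreserving.id volume).prod mp2
  rw [← Measure.volume_eq_prod] at h2
  exact h2.comp h1

lemma iterSig_one {n : ℕ} (X : ℝ → Fin n → ℝ) (s t : ℝ) (i : Fin n) :
    iterSig X s t ![i] = ∫ x in Set.Icc s t, deriv (fun u => X u i) x := by
  rw [iterSig]
  have hset : {τ : Fin 1 → ℝ | (∀ l, s ≤ τ l ∧ τ l ≤ t) ∧ ∀ l m : Fin 1, l ≤ m → τ l ≤ τ m}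
      = eq1 ⁻¹' (Set.Icc s t) := by
    ext τ
    simp only [Set.mem_setOf_eq, Set.mem_preimage, eq1_apply, Set.mem_Icc]
    constructor
    · rintro ⟨h1, -⟩; exact h1 0
    · rintro h
      refine ⟨fun l => ?_, fun l m _ => ?_⟩
      · rw [Subsingleton.elim l 0]; exact h
      · rw [Subsingleton.elim l m]
  rw [hset]
  have := mp1.setIntegral_preimage_emb (MeasurableEquiv.measurableEmbedding eq1)
    (fun x => deriv (fun u => X u i) x) (Set.Icc s t)
  rw [← this]
  refine setIntegral_congr_fun ?_ fun τ _ => ?_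
  · exact (measurableSet_Icc).preimage eq1.measurable
  · simp [eq1_apply]

lemma iterSig_two {n : ℕ} (X : ℝ → Fin n → ℝ) (s t : ℝ) (j k : Fin n) :
    iterSig X s t ![j, k] = ∫ p in {p : ℝ × ℝ | s ≤ p.1 ∧ p.1 ≤ p.2 ∧ p.2 ≤ t},
      deriv (fun u => X u j) p.1 * deriv (fun u => X u k) p.2 := by
  rw [iterSig]
  set T2 : Set (ℝ × ℝ) := {p : ℝ × ℝ | s ≤ p.1 ∧ p.1 ≤ p.2 ∧ p.2 ≤ t} with hT2
  have hset : {τ : Fin 2 → ℝ | (∀ l, s ≤ τ l ∧ τ l ≤ t) ∧ ∀ l m : Fin 2, l ≤ m → τ l ≤ τ m}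
      = eq2 ⁻¹' T2 := by
    ext τ
    simp only [Set.mem_setOf_eq, Set.mem_preimage, eq2_apply, hT2]
    constructor
    · rintro ⟨h1, h2⟩
      exact ⟨(h1 0).1, h2 0 1 (by decide), (h1 1).2⟩
    · rintro ⟨ha, hb, hc⟩
      refine ⟨fun l => ?_, fun l m hlm => ?_⟩
      · fin_cases l
        · exact ⟨ha, le_trans hb hc⟩
        · exact ⟨le_trans ha hb, hc⟩
      · fin_cases l <;> fin_cases m
        · exact le_rfl
        · exact hb
        · exact absurd hlm (by decide)
        · exact le_rfl
  rw [hset]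
  have := mp2.setIntegral_preimage_emb (MeasurableEquiv.measurableEmbedding eq2)
    (fun p : ℝ × ℝ => deriv (fun u => X u j) p.1 * deriv (fun u => X u k) p.2) T2
  rw [← this]
  refine setIntegral_congr_fun ?_ fun τ _ => ?_
  · have : MeasurableSet T2 := by
      apply MeasurableSet.inter
      · exact measurableSet_le measurable_const measurable_fst
      exact MeasurableSet.inter (measurableSet_le measurable_fst measurable_snd)
        (measurableSet_le measurable_snd measurable_const)
    exact this.preimage eq2.measurable
  · simp [eq2_apply, Fin.prod_univ_two]

lemma iterSig_three {n : ℕ} (X : ℝ → Fin n → ℝ) (s t : ℝ) (a b c : Fin n) :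
    iterSig X s t ![a, b, c] =
      ∫ q in {q : ℝ × ℝ × ℝ | s ≤ q.1 ∧ q.1 ≤ q.2.1 ∧ q.2.1 ≤ q.2.2 ∧ q.2.2 ≤ t},
      deriv (fun u => X u a) q.1 *
        (deriv (fun u => X u b) q.2.1 * deriv (fun u => X u c) q.2.2) := by
  rw [iterSig]
  set Δ : Set (ℝ × ℝ × ℝ) :=
    {q : ℝ × ℝ × ℝ | s ≤ q.1 ∧ q.1 ≤ q.2.1 ∧ q.2.1 ≤ q.2.2 ∧ q.2.2 ≤ t} with hΔ
  have hset : {τ : Fin 3 → ℝ | (∀ l, s ≤ τ l ∧ τ l ≤ t) ∧ ∀ l m : Fin 3, l ≤ m → τ l ≤ τ m}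
      = eq3 ⁻¹' Δ := by
    ext τ
    simp only [Set.mem_setOf_eq, Set.mem_preimage, eq3_apply, hΔ]
    constructor
    · rintro ⟨h1, h2⟩
      exact ⟨(h1 0).1, h2 0 1 (by decide), h2 1 2 (by decide), (h1 2).2⟩
    · rintro ⟨h0, h1, h2, h3⟩
      refine ⟨fun l => ?_, fun l m hlm => ?_⟩
      · fin_cases l
        · exact ⟨h0, le_trans h1 (le_trans h2 h3)⟩
        · exact ⟨le_trans h0 h1, le_trans h2 h3⟩
        · exact ⟨le_trans h0 (le_trans h1 h2), h3⟩
      · fin_cases l <;> fin_cases m <;>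
          first
            | exact le_rfl
            | exact h1
            | exact h2
            | exact le_trans h1 h2
            | exact absurd hlm (by decide)
  rw [hset]
  have := mp3.setIntegral_preimage_emb (MeasurableEquiv.measurableEmbedding eq3)
    (fun q : ℝ × ℝ × ℝ => deriv (fun u => X u a) q.1 *
      (deriv (fun u => X u b) q.2.1 * deriv (fun u => X u c) q.2.2)) Δ
  rw [← this]
  refine setIntegral_congr_fun ?_ fun τ _ => ?_
  · have : MeasurableSet Δ := by
      refine MeasurableSet.inter (measurableSet_le measurable_const measurable_fst) ?_
      refine MeasurableSet.inter
        (measurableSet_le measurable_fst (measurable_fst.comp measurable_snd)) ?_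
      exact MeasurableSet.inter
        (measurableSet_le (measurable_fst.comp measurable_snd)
          (measurable_snd.comp measurable_snd))
        (measurableSet_le (measurable_snd.comp measurable_snd) measurable_const)
    exact this.preimage eq3.measurable
  · simp [eq3_apply, Fin.prod_univ_three, mul_assoc]

noncomputable def sw : (ℝ × ℝ × ℝ) ≃ᵐ (ℝ × ℝ × ℝ) :=
  MeasurableEquiv.prodAssoc.symm.trans
    (((MeasurableEquiv.prodComm : (ℝ × ℝ) ≃ᵐ (ℝ × ℝ)).prodCongr (MeasurableEquiv.refl ℝ)).trans
      MeasurableEquiv.prodAssoc)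

noncomputable def cyc : (ℝ × ℝ × ℝ) ≃ᵐ (ℝ × ℝ × ℝ) :=
  (MeasurableEquiv.prodComm : (ℝ × (ℝ × ℝ)) ≃ᵐ ((ℝ × ℝ) × ℝ)).trans MeasurableEquiv.prodAssoc

lemma sw_apply (q : ℝ × ℝ × ℝ) : sw q = (q.2.1, q.1, q.2.2) := rfl
lemma cyc_apply (q : ℝ × ℝ × ℝ) : cyc q = (q.2.1, q.2.2, q.1) := rfl

lemma vol3 : (volume : Measure (ℝ × ℝ × ℝ)) = volume.prod (volume.prod volume) := by
  rw [Measure.volume_eq_prod, Measure.volume_eq_prod]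

lemma mp_sw : MeasurePreserving sw volume volume := by
  have h1 : MeasurePreserving (MeasurableEquiv.prodAssoc.symm :
      ℝ × ℝ × ℝ ≃ᵐ (ℝ × ℝ) × ℝ) (volume.prod (volume.prod volume))
      ((volume.prod volume).prod volume) :=
    (measurePreserving_prodAssoc volume volume volume).symm _
  have h2 : MeasurePreserving (Prod.map (Prod.swap : ℝ × ℝ → ℝ × ℝ) (id : ℝ → ℝ))
      ((volume.prod volume).prod volume) ((volume.prod volume).prod volume) :=
    (Measure.measurePreserving_swap).prod (MeasurePreserving.id volume)
  have h3 : MeasurePreserving (MeasurableEquiv.prodAssoc : (ℝ × ℝ) × ℝ ≃ᵐ ℝ × ℝ × ℝ)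
      ((volume.prod volume).prod volume) (volume.prod (volume.prod volume)) :=
    measurePreserving_prodAssoc volume volume volume
  have h := (h3.comp h2).comp h1
  rw [vol3]
  exact h

lemma mp_cyc : MeasurePreserving cyc volume volume := by
  have h1 : MeasurePreserving (Prod.swap : ℝ × (ℝ × ℝ) → (ℝ × ℝ) × ℝ)
      (volume.prod (volume.prod volume)) ((volume.prod volume).prod volume) :=
    Measure.measurePreserving_swap
  have h3 : MeasurePreserving (MeasurableEquiv.prodAssoc : (ℝ × ℝ) × ℝ ≃ᵐ ℝ × ℝ × ℝ)
      ((volume.prod volume).prod volume) (volume.prod (volume.prod volume)) :=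
    measurePreserving_prodAssoc volume volume volume
  have h := h3.comp h1
  rw [vol3]
  exact h

lemma null_12 : volume {q : ℝ × ℝ × ℝ | q.1 = q.2.1} = 0 := by
  set L : (ℝ × ℝ × ℝ) →ₗ[ℝ] ℝ :=
    (LinearMap.fst ℝ ℝ (ℝ × ℝ)) - (LinearMap.fst ℝ ℝ ℝ).comp (LinearMap.snd ℝ ℝ (ℝ × ℝ)) with hL
  have hset : {q : ℝ × ℝ × ℝ | q.1 = q.2.1} = (LinearMap.ker L : Set (ℝ × ℝ × ℝ)) := by
    ext q
    simp [hL, LinearMap.mem_ker, sub_eq_zero]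
  rw [hset]
  apply Measure.addHaar_submodule
  intro h
  have : ((1 : ℝ), ((0 : ℝ), (0 : ℝ))) ∈ LinearMap.ker L := h ▸ Submodule.mem_top
  simp [hL, LinearMap.mem_ker] at this

lemma null_13 : volume {q : ℝ × ℝ × ℝ | q.1 = q.2.2} = 0 := by
  set L : (ℝ × ℝ × ℝ) →ₗ[ℝ] ℝ :=
    (LinearMap.fst ℝ ℝ (ℝ × ℝ)) - (LinearMap.snd ℝ ℝ ℝ).comp (LinearMap.snd ℝ ℝ (ℝ × ℝ)) with hL
  have hset : {q : ℝ × ℝ × ℝ | q.1 = q.2.2} = (LinearMap.ker L : Set (ℝ × ℝ × ℝ)) := by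
    ext q
    simp [hL, LinearMap.mem_ker, sub_eq_zero]
  rw [hset]
  apply Measure.addHaar_submodule
  intro h
  have : ((1 : ℝ), ((0 : ℝ), (0 : ℝ))) ∈ LinearMap.ker L := h ▸ Submodule.mem_top
  simp [hL, LinearMap.mem_ker] at this

end ShuffleAux

open ShuffleAux in
theorem shuffle_one_two (d : ℕ) (X : ℝ → Fin (d + 1) → ℝ) (hX : ContDiff ℝ 1 X)
    (s t : ℝ) (hst : s ≤ t) (i j k : Fin (d + 1)) :
    iterSig X s t ![i] * iterSig X s t ![j, k] =
      iterSig X s t ![i, j, k] + iterSig X s t ![j, i, k] + iterSig X s t ![j, k, i] := by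
  set f : ℝ → ℝ := deriv (fun u => X u i) with hf_def
  set g : ℝ → ℝ := deriv (fun u => X u j) with hg_def
  set h : ℝ → ℝ := deriv (fun u => X u k) with hh_def
  have hf : Continuous f := (contDiff_pi.mp hX i).continuous_deriv le_rfl
  have hg : Continuous g := (contDiff_pi.mp hX j).continuous_deriv le_rfl
  have hh : Continuous h := (contDiff_pi.mp hX k).continuous_deriv le_rfl
  set F : ℝ × ℝ × ℝ → ℝ := fun q => f q.1 * (g q.2.1 * h q.2.2) with hF_def
  have hF : Continuous F := by fun_prop
  set Δ : Set (ℝ × ℝ × ℝ) :=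
    {q : ℝ × ℝ × ℝ | s ≤ q.1 ∧ q.1 ≤ q.2.1 ∧ q.2.1 ≤ q.2.2 ∧ q.2.2 ≤ t} with hΔ
  set R₂ : Set (ℝ × ℝ × ℝ) :=
    {q : ℝ × ℝ × ℝ | s ≤ q.2.1 ∧ q.2.1 ≤ q.1 ∧ q.1 ≤ q.2.2 ∧ q.2.2 ≤ t} with hR₂
  set R₃ : Set (ℝ × ℝ × ℝ) :=
    {q : ℝ × ℝ × ℝ | s ≤ q.2.1 ∧ q.2.1 ≤ q.2.2 ∧ q.2.2 ≤ q.1 ∧ q.1 ≤ t} with hR₃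
  -- closedness and compactness
  have hΔc : IsClosed Δ := by
    refine IsClosed.inter (isClosed_le continuous_const continuous_fst) ?_
    refine IsClosed.inter (isClosed_le continuous_fst (continuous_fst.comp continuous_snd)) ?_
    exact IsClosed.inter
      (isClosed_le (continuous_fst.comp continuous_snd) (continuous_snd.comp continuous_snd))
      (isClosed_le (continuous_snd.comp continuous_snd) continuous_const)
  have hR₂c : IsClosed R₂ := by
    refine IsClosed.inter (isClosed_le continuous_const (continuous_fst.comp continuous_snd)) ?_
    refine IsClosed.inter (isClosed_le (continuous_fst.comp continuous_snd) continuous_fst) ?_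
    exact IsClosed.inter
      (isClosed_le continuous_fst (continuous_snd.comp continuous_snd))
      (isClosed_le (continuous_snd.comp continuous_snd) continuous_const)
  have hR₃c : IsClosed R₃ := by
    refine IsClosed.inter (isClosed_le continuous_const (continuous_fst.comp continuous_snd)) ?_
    refine IsClosed.inter
      (isClosed_le (continuous_fst.comp continuous_snd) (continuous_snd.comp continuous_snd)) ?_
    exact IsClosed.inter
      (isClosed_le (continuous_snd.comp continuous_snd) continuous_fst)
      (isClosed_le continuous_fst continuous_const)
  have hcube : IsCompact ((Set.Icc s t) ×ˢ ((Set.Icc s t) ×ˢ (Set.Icc s t))) :=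
    isCompact_Icc.prod (isCompact_Icc.prod isCompact_Icc)
  have hΔk : IsCompact Δ := by
    refine hcube.of_isClosed_subset hΔc ?_
    rintro ⟨x, y, z⟩ ⟨h0, h1, h2, h3⟩
    exact ⟨⟨h0, le_trans h1 (le_trans h2 h3)⟩, ⟨le_trans h0 h1, le_trans h2 h3⟩,
      ⟨le_trans h0 (le_trans h1 h2), h3⟩⟩
  have hR₂k : IsCompact R₂ := by
    refine hcube.of_isClosed_subset hR₂c ?_
    rintro ⟨x, y, z⟩ ⟨h0, h1, h2, h3⟩
    exact ⟨⟨le_trans h0 h1, le_trans h2 h3⟩, ⟨h0, le_trans h1 (le_trans h2 h3)⟩,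
      ⟨le_trans h0 (le_trans h1 h2), h3⟩⟩
  have hR₃k : IsCompact R₃ := by
    refine hcube.of_isClosed_subset hR₃c ?_
    rintro ⟨x, y, z⟩ ⟨h0, h1, h2, h3⟩
    exact ⟨⟨le_trans h0 (le_trans h1 h2), h3⟩, ⟨h0, le_trans h1 (le_trans h2 h3)⟩,
      ⟨le_trans h0 h1, le_trans h2 h3⟩⟩
  have hIΔ : IntegrableOn F Δ := hF.continuousOn.integrableOn_compact hΔk
  have hIR₂ : IntegrableOn F R₂ := hF.continuousOn.integrableOn_compact hR₂k
  have hIR₃ : IntegrableOn F R₃ := hF.continuousOn.integrableOn_compact hR₃k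
  -- decomposition of the product region
  have hdecomp : (Set.Icc s t) ×ˢ {p : ℝ × ℝ | s ≤ p.1 ∧ p.1 ≤ p.2 ∧ p.2 ≤ t}
      = Δ ∪ R₂ ∪ R₃ := by
    ext ⟨x, y, z⟩
    simp only [Set.mem_prod, Set.mem_Icc, Set.mem_setOf_eq, Set.mem_union, hΔ, hR₂, hR₃]
    constructor
    · rintro ⟨⟨hx0, hx1⟩, hy0, hyz, hz1⟩
      rcases le_total x y with hxy | hyx
      · exact Or.inl (Or.inl ⟨hx0, hxy, hyz, hz1⟩)
      · rcases le_total x z with hxz | hzx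
        · exact Or.inl (Or.inr ⟨hy0, hyx, hxz, hz1⟩)
        · exact Or.inr ⟨hy0, hyz, hzx, hx1⟩
    · rintro ((⟨h0, h1, h2, h3⟩ | ⟨h0, h1, h2, h3⟩) | ⟨h0, h1, h2, h3⟩)
      · exact ⟨⟨h0, le_trans h1 (le_trans h2 h3)⟩, le_trans h0 h1, h2, h3⟩
      · exact ⟨⟨le_trans h0 h1, le_trans h2 h3⟩, h0, le_trans h1 h2, h3⟩
      · exact ⟨⟨le_trans h0 (le_trans h1 h2), h3⟩, h0, h1, le_trans h2 h3⟩
  -- a.e. disjointness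
  have hd1 : AEDisjoint volume Δ R₂ := by
    refine measure_mono_null (fun q hq => ?_) null_12
    exact le_antisymm hq.1.2.1 hq.2.2.1
  have hd2 : AEDisjoint volume (Δ ∪ R₂) R₃ := by
    refine measure_mono_null (fun q hq => ?_) null_13
    rcases hq with ⟨hq1 | hq1, hq2⟩
    · exact le_antisymm (le_trans hq1.2.1 hq1.2.2.1) hq2.2.2.1
    · exact le_antisymm hq1.2.2.1 hq2.2.2.1
  -- left-hand side as an integral over the product region
  have hlhs : iterSig X s t ![i] * iterSig X s t ![j, k]
      = ∫ q in (Set.Icc s t) ×ˢ {p : ℝ × ℝ | s ≤ p.1 ∧ p.1 ≤ p.2 ∧ p.2 ≤ t}, F q := by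
    rw [iterSig_one, iterSig_two]
    have := setIntegral_prod_mul (μ := (volume : Measure ℝ)) (ν := (volume : Measure (ℝ × ℝ)))
      f (fun p : ℝ × ℝ => g p.1 * h p.2) (Set.Icc s t)
      {p : ℝ × ℝ | s ≤ p.1 ∧ p.1 ≤ p.2 ∧ p.2 ≤ t}
    rw [← Measure.volume_eq_prod] at this
    rw [← this]
  -- change of variables for the two permuted simplices
  have hsw : ∫ q in R₂, F q = ∫ q in Δ, g q.1 * (f q.2.1 * h q.2.2) := by
    have hpre : sw ⁻¹' Δ = R₂ := by
      ext ⟨x, y, z⟩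
      simp only [Set.mem_preimage, sw_apply, hΔ, hR₂, Set.mem_setOf_eq]
    have hcv := mp_sw.setIntegral_preimage_emb sw.measurableEmbedding
      (fun q : ℝ × ℝ × ℝ => g q.1 * (f q.2.1 * h q.2.2)) Δ
    rw [← hcv, hpre]
    refine setIntegral_congr_fun hR₂c.measurableSet fun q _ => ?_
    simp only [sw_apply, hF_def]
    ring
  have hcyc : ∫ q in R₃, F q = ∫ q in Δ, g q.1 * (h q.2.1 * f q.2.2) := by
    have hpre : cyc ⁻¹' Δ = R₃ := by
      ext ⟨x, y, z⟩
      simp only [Set.mem_preimage, cyc_apply, hΔ, hR₃, Set.mem_setOf_eq]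
    have hcv := mp_cyc.setIntegral_preimage_emb cyc.measurableEmbedding
      (fun q : ℝ × ℝ × ℝ => g q.1 * (h q.2.1 * f q.2.2)) Δ
    rw [← hcv, hpre]
    refine setIntegral_congr_fun hR₃c.measurableSet fun q _ => ?_
    simp only [cyc_apply, hF_def]
    ring
  rw [hlhs, hdecomp, integral_union_ae hd2 hR₃c.measurableSet.nullMeasurableSet
      (hIΔ.union hIR₂) hIR₃,
    integral_union_ae hd1 hR₂c.measurableSet.nullMeasurableSet hIΔ hIR₂,
    hsw, hcyc]
  rw [iterSig_three X s t i j k, iterSig_three X s t j i k, iterSig_three X s t j k i]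
end
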